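/- arXiv:2202.00725 — 4 statements merged into one kernel-verified Lean document; each statement's English description precedes it below -/
import Mathlib

section
/- Let d ≥ 1 and let A be a measurement with n outcomes on ℂ^d. Then A is post-processing minimal (i.e., for every measurement B with any finite number of outcomes, B ⪯ A implies A ⪯ B) if and only if A is trivial, i.e., for every outcome x there exists a real number a_x ≥ 0 such that A x = (a_x : ℂ) • 1. -/
/-!
The one-outcome measurement `{1}` is a post-processing of every measurement, and a measurement
is a post-processing of `{1}` exactly when each of its effects is a multiple of `1`. Conversely,
a trivial measurement `A x = a x • 1` is recovered from any measurement `B` by the kernel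
`μ x y = a x`, which is column-stochastic because `∑ x, A x = 1` forces `∑ x, a x = 1`.
-/

open Matrix
open scoped Kronecker ComplexOrder

noncomputable section

/-- A measurement (POVM): a finite family of positive semidefinite matrices summing to `1`. -/
def IsMeasurement {ι κ : Type*} [Fintype ι] [DecidableEq ι] [Fintype κ]
    (A : κ → Matrix ι ι ℂ) : Prop :=
  (∀ x, (A x).PosSemidef) ∧ ∑ x, A x = 1

/-- `A` is a post-processing of `B`: `A ⪯ B`. -/
def PostProc {ι : Type*} {n m : ℕ}
    (A : Fin n → Matrix ι ι ℂ) (B : Fin m → Matrix ι ι ℂ) : Prop :=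
  ∃ μ : Fin n → Fin m → ℝ,
    (∀ x y, 0 ≤ μ x y) ∧ (∀ y, ∑ x, μ x y = 1) ∧
    (∀ x, A x = ∑ y, (μ x y : ℂ) • B y)

/-- The outer product `|E⟩⟨F|` of the vectorizations of two matrices. -/
def outerProd {ι : Type*} (E F : Matrix ι ι ℂ) : Matrix (ι × ι) (ι × ι) ℂ :=
  Matrix.of fun p q => E p.1 p.2 * star (F q.1 q.2)

/-- The (un-normalized) Fisher information map of a measurement. -/
noncomputable def Fisher {ι κ : Type*} [Fintype ι] [Fintype κ]
    (A : κ → Matrix ι ι ℂ) : Matrix (ι × ι) (ι × ι) ℂ :=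
  ∑ x, (Matrix.trace (A x))⁻¹ • outerProd (A x) (A x)

/-- The generalized Fisher information map of a measurement, relative to a
positive definite state `ρ` (with positive semidefinite square root `ρ^{1/2}`). -/
noncomputable def FisherRho {ι κ : Type*} [Fintype ι] [DecidableEq ι] [Fintype κ]
    {ρ : Matrix ι ι ℂ} (hρ : ρ.PosDef) (A : κ → Matrix ι ι ℂ) :
    Matrix (ι × ι) (ι × ι) ℂ :=
  ∑ x, (Matrix.trace (ρ * A x))⁻¹ •
    outerProd ((hρ.posSemidef.1.eigenvectorUnitary.1 *
        diagonal ((↑) ∘ (√·) ∘ hρ.posSemidef.1.eigenvalues) *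
        (star hρ.posSemidef.1.eigenvectorUnitary : Matrix ι ι ℂ)) * A x)
      ((hρ.posSemidef.1.eigenvectorUnitary.1 *
        diagonal ((↑) ∘ (√·) ∘ hρ.posSemidef.1.eigenvalues) *
        (star hρ.posSemidef.1.eigenvectorUnitary : Matrix ι ι ℂ)) * A x)

/-- The height of a finite family of self-adjoint matrices: the infimum of the traces of
Hermitian matrices dominating every member in the Loewner order. -/
noncomputable def height {ι κ : Type*} [Fintype ι] [Fintype κ]
    (X : κ → Matrix ι ι ℂ) : ℝ :=
  sInf { t : ℝ | ∃ H : Matrix ι ι ℂ, H.IsHermitian ∧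
    (∀ i, (H - X i).PosSemidef) ∧ t = (Matrix.trace H).re }

theorem isMeasurement_const_one {ι : Type*} [Fintype ι] [DecidableEq ι] :
    IsMeasurement (fun _ : Fin 1 => (1 : Matrix ι ι ℂ)) :=
  ⟨fun _ => PosSemidef.one, by simp⟩

theorem postProc_const_one {ι : Type*} [Fintype ι] [DecidableEq ι] {n : ℕ}
    {A : Fin n → Matrix ι ι ℂ} (hA : ∑ x, A x = 1) :
    PostProc (fun _ : Fin 1 => (1 : Matrix ι ι ℂ)) A :=
  ⟨fun _ _ => 1, fun _ _ => zero_le_one, fun _ => by simp, fun _ => by simp [hA]⟩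

theorem sum_eq_one_of_sum_smul_one {ι κ : Type*} [Fintype ι] [DecidableEq ι] [Nonempty ι]
    [Fintype κ] {a : κ → ℝ} (h : ∑ x, (a x : ℂ) • (1 : Matrix ι ι ℂ) = 1) : ∑ x, a x = 1 := by
  rw [← Finset.sum_smul] at h
  exact_mod_cast smul_left_injective ℂ one_ne_zero (h.trans (one_smul ℂ _).symm)

theorem postProc_of_eq_smul_one {ι : Type*} [Fintype ι] [DecidableEq ι] {n m : ℕ}
    {A : Fin n → Matrix ι ι ℂ} {B : Fin m → Matrix ι ι ℂ} {a : Fin n → ℝ}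
    (ha : ∀ x, 0 ≤ a x) (ha_sum : ∑ x, a x = 1) (hAa : ∀ x, A x = (a x : ℂ) • 1)
    (hB : ∑ y, B y = 1) : PostProc A B :=
  ⟨fun x _ => a x, fun x _ => ha x, fun _ => ha_sum,
    fun x => by rw [hAa, ← Finset.smul_sum, hB]⟩

/-- A measurement is post-processing minimal iff it is trivial. -/
theorem stmt0 {d n : ℕ} (hd : 1 ≤ d) (A : Fin n → Matrix (Fin d) (Fin d) ℂ)
    (hA : IsMeasurement A) :
    (∀ (m : ℕ) (B : Fin m → Matrix (Fin d) (Fin d) ℂ),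
        IsMeasurement B → PostProc B A → PostProc A B) ↔
      (∀ x, ∃ a : ℝ, 0 ≤ a ∧ A x = (a : ℂ) • 1) := by
  constructor
  · intro hmin x
    obtain ⟨μ, hμ, -, hAμ⟩ := hmin 1 _ isMeasurement_const_one (postProc_const_one hA.2)
    exact ⟨μ x 0, hμ x 0, by simpa using hAμ x⟩
  · intro htriv m B hB _
    choose a ha hAa using htriv
    have : Nonempty (Fin d) := ⟨⟨0, hd⟩⟩
    have ha_sum : ∑ x, a x = 1 := sum_eq_one_of_sum_smul_one (by simpa only [hAa] using hA.2)
    exact postProc_of_eq_smul_one ha ha_sum hAa hB.2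
end
end

section
/- Let Φ : Matrix (Fin d) (Fin d) ℂ →ₗ[ℂ] Matrix (Fin D) (Fin r) ℂ be a linear map and let ρ ∈ Matrix (Fin d) (Fin d) ℂ be positive definite. For a nonzero positive semidefinite matrix E, set g(E) = (Matrix.trace (ρ * E))⁻¹ • (Φ E * (Φ E)ᴴ). Then for all nonzero positive semidefinite matrices E and F, the matrix g(E) + g(F) − g(E + F) is positive semidefinite; moreover g(c • E) = c • g(E) for every real c > 0. -/
open Matrix
open scoped Kronecker ComplexOrder

noncomputable section

/-
Positivity of `tr (ρ E)` comes from writing it as `tr (S E S)` with `S = ρ^{1/2}` invertible.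
Subadditivity is the matrix form of `|x|²/a + |y|²/b - |x + y|²/(a + b) = |b x - a y|²/(a b (a + b))`,
applied to `x = Φ E`, `y = Φ F`, `a = tr (ρ E)`, `b = tr (ρ F)`, using linearity of `Φ` and of the trace.
-/

namespace Matrix

variable {m n 𝕜 : Type*} [Fintype n] [RCLike 𝕜]

theorem PosDef.trace_mul_pos [DecidableEq n] {ρ E : Matrix n n 𝕜} (hρ : ρ.PosDef)
    (hE : E.PosSemidef) (hE0 : E ≠ 0) : 0 < (ρ * E).trace := by
  open scoped MatrixOrder Matrix.Norms.L2Operator in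
  obtain ⟨S, hS, hSS, hSh⟩ : ∃ S : Matrix n n 𝕜, IsUnit S ∧ S * S = ρ ∧ Sᴴ = S :=
    ⟨CFC.sqrt ρ, hρ.isStrictlyPositive.isUnit_cfcSqrt, CFC.sqrt_mul_sqrt_self ρ,
      (CFC.sqrt_nonneg ρ).posSemidef.isHermitian.eq⟩
  have hpsd : (S * E * Sᴴ).PosSemidef := hE.mul_mul_conjTranspose_same S
  have htr : (ρ * E).trace = (S * E * Sᴴ).trace := by
    rw [hSh, ← hSS, Matrix.mul_assoc, trace_mul_comm, Matrix.mul_assoc]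
  rw [htr]
  refine hpsd.trace_nonneg.lt_of_ne' fun h => hE0 ?_
  rwa [hpsd.trace_eq_zero_iff, hSh, Matrix.mul_assoc, hS.mul_right_eq_zero,
    hS.mul_left_eq_zero] at h

theorem inv_smul_mul_conjTranspose_add_sub {a b : 𝕜} (ha : 0 < a) (hb : 0 < b)
    (A B : Matrix m n 𝕜) :
    a⁻¹ • (A * Aᴴ) + b⁻¹ • (B * Bᴴ) - (a + b)⁻¹ • ((A + B) * (A + B)ᴴ) =
      (a * b * (a + b))⁻¹ • ((b • A - a • B) * (b • A - a • B)ᴴ) := by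
  simp only [conjTranspose_add, conjTranspose_sub, conjTranspose_smul,
    (IsSelfAdjoint.of_nonneg ha.le).star_eq, (IsSelfAdjoint.of_nonneg hb.le).star_eq,
    Matrix.add_mul, Matrix.mul_add, Matrix.sub_mul, Matrix.mul_sub, Matrix.smul_mul,
    Matrix.mul_smul]
  match_scalars <;> field_simp [ha.ne', hb.ne'] <;> ring

theorem posSemidef_inv_smul_mul_conjTranspose_add_sub [Finite m] {a b : 𝕜} (ha : 0 < a)
    (hb : 0 < b) (A B : Matrix m n 𝕜) :
    (a⁻¹ • (A * Aᴴ) + b⁻¹ • (B * Bᴴ) - (a + b)⁻¹ • ((A + B) * (A + B)ᴴ)).PosSemidef := by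
  rw [inv_smul_mul_conjTranspose_add_sub ha hb]
  exact (posSemidef_self_mul_conjTranspose _).smul (inv_pos.2 (by positivity)).le

theorem inv_mul_smul_smul_mul_conjTranspose_smul {c : 𝕜} (hc : star c = c) (t : 𝕜)
    (A : Matrix m n 𝕜) :
    (c * t)⁻¹ • ((c • A) * (c • A)ᴴ) = c • (t⁻¹ • (A * Aᴴ)) := by
  rcases eq_or_ne c 0 with rfl | hc0
  · simp
  rw [conjTranspose_smul, hc, Matrix.smul_mul, Matrix.mul_smul, smul_smul, smul_smul, smul_smul]
  congr 1
  field_simp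

end Matrix

/-- Quadratic maps satisfy the order morphism axioms. -/
theorem stmt3 {d D r : ℕ} (Φ : Matrix (Fin d) (Fin d) ℂ →ₗ[ℂ] Matrix (Fin D) (Fin r) ℂ)
    {ρ : Matrix (Fin d) (Fin d) ℂ} (hρ : ρ.PosDef)
    (g : Matrix (Fin d) (Fin d) ℂ → Matrix (Fin D) (Fin D) ℂ)
    (hg : ∀ E, g E = (Matrix.trace (ρ * E))⁻¹ • (Φ E * (Φ E)ᴴ)) :
    (∀ E F : Matrix (Fin d) (Fin d) ℂ, E.PosSemidef → F.PosSemidef → E ≠ 0 → F ≠ 0 →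
      (g E + g F - g (E + F)).PosSemidef) ∧
    (∀ (c : ℝ) (E : Matrix (Fin d) (Fin d) ℂ), E.PosSemidef → E ≠ 0 → 0 < c →
      g ((c : ℂ) • E) = (c : ℂ) • g E) := by
  refine ⟨fun E F hE hF hE0 hF0 => ?_, fun c E _ _ _ => ?_⟩
  · rw [hg, hg, hg, map_add, Matrix.mul_add, trace_add]
    exact posSemidef_inv_smul_mul_conjTranspose_add_sub (hρ.trace_mul_pos hE hE0)
      (hρ.trace_mul_pos hF hF0) _ _
  · rw [hg, hg, map_smul, Matrix.mul_smul, trace_smul, smul_eq_mul]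
    exact inv_mul_smul_smul_mul_conjTranspose_smul (Complex.conj_ofReal c) _ _
end
end

section
/- Let Φ : Matrix (Fin d) (Fin d) ℂ →ₗ[ℂ] Matrix (Fin D) (Fin r) ℂ be a linear map, and for a measurement A with n outcomes on ℂ^d all of whose effects are nonzero, define G(A) = ∑ x, (Matrix.trace (A x))⁻¹ • (Φ (A x) * (Φ (A x))ᴴ). Then the Fisher information map is at least as informative as G: for all measurements A and B (with all effects nonzero), if F(B) − F(A) is positive semidefinite, then G(B) − G(A) is positive semidefinite. -/
/-!
Writing the columns of `Φ E` as `K_b (vec E)`, the assignment `|E⟩⟨F| ↦ Φ E (Φ F)ᴴ` extends to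
the linear map `X ↦ ∑ b, K_b X K_bᴴ` in Kraus form. It sends `F(A)` to `G(A)`, and it is positive,
so it maps `F(B) - F(A) ⪰ 0` to `G(B) - G(A) ⪰ 0`.
-/

open Matrix
open scoped Kronecker ComplexOrder

noncomputable section

namespace Matrix

variable {ι : Type*}

theorem outerProd_eq_vecMulVec (E F : Matrix ι ι ℂ) :
    outerProd E F = vecMulVec (Function.uncurry E) (star (Function.uncurry F)) := rfl

variable [DecidableEq ι] {κ ρ : Type*}

/-- The `b`-th Kraus operator of `Φ`: `krausOp Φ b *ᵥ vec E` is the `b`-th column of `Φ E`. -/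
def krausOp (Φ : Matrix ι ι ℂ →ₗ[ℂ] Matrix κ ρ ℂ) (b : ρ) : Matrix κ (ι × ι) ℂ :=
  of fun a p => Φ (single p.1 p.2 1) a b

theorem krausOp_mulVec_uncurry [Fintype ι] (Φ : Matrix ι ι ℂ →ₗ[ℂ] Matrix κ ρ ℂ) (b : ρ)
    (E : Matrix ι ι ℂ) : krausOp Φ b *ᵥ Function.uncurry E = fun a => Φ E a b := by
  conv_rhs => rw [matrix_eq_sum_single E]
  ext a
  simp only [krausOp, mulVec, dotProduct, Fintype.sum_prod_type, map_sum, Matrix.sum_apply,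
    of_apply]
  refine Finset.sum_congr rfl fun i _ => Finset.sum_congr rfl fun j _ => ?_
  have hsingle : single i j (E i j) = E i j • single i j (1 : ℂ) := by
    rw [smul_single, smul_eq_mul, mul_one]
  rw [hsingle, map_smul, smul_apply, smul_eq_mul, mul_comm]
  rfl

variable [Fintype ι] [Fintype ρ]

def krausMap (Φ : Matrix ι ι ℂ →ₗ[ℂ] Matrix κ ρ ℂ) :
    Matrix (ι × ι) (ι × ι) ℂ →ₗ[ℂ] Matrix κ κ ℂ :=
  ∑ b, mulLeftLinearMap κ ℂ (krausOp Φ b) ∘ₗ mulRightLinearMap (ι × ι) ℂ (krausOp Φ b)ᴴ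

theorem krausMap_apply (Φ : Matrix ι ι ℂ →ₗ[ℂ] Matrix κ ρ ℂ) (X : Matrix (ι × ι) (ι × ι) ℂ) :
    krausMap Φ X = ∑ b, krausOp Φ b * X * (krausOp Φ b)ᴴ := by
  simp [krausMap, Matrix.mul_assoc]

theorem krausMap_outerProd (Φ : Matrix ι ι ℂ →ₗ[ℂ] Matrix κ ρ ℂ) (E F : Matrix ι ι ℂ) :
    krausMap Φ (outerProd E F) = Φ E * (Φ F)ᴴ := by
  ext a a'
  simp only [krausMap_apply, outerProd_eq_vecMulVec, mul_vecMulVec, vecMulVec_mul,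
    ← star_mulVec, krausOp_mulVec_uncurry, Matrix.sum_apply, mul_apply, vecMulVec_apply]
  rfl

theorem krausMap_fisher {ω : Type*} [Fintype ω] (Φ : Matrix ι ι ℂ →ₗ[ℂ] Matrix κ ρ ℂ)
    (A : ω → Matrix ι ι ℂ) :
    krausMap Φ (Fisher A) = ∑ x, (trace (A x))⁻¹ • (Φ (A x) * (Φ (A x))ᴴ) := by
  simp only [Fisher, map_sum, map_smul, krausMap_outerProd]

theorem PosSemidef.krausMap [Fintype κ] {X : Matrix (ι × ι) (ι × ι) ℂ} (hX : X.PosSemidef)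
    (Φ : Matrix ι ι ℂ →ₗ[ℂ] Matrix κ ρ ℂ) : (Matrix.krausMap Φ X).PosSemidef := by
  rw [krausMap_apply]
  exact posSemidef_sum _ fun b _ => hX.mul_mul_conjTranspose_same _

end Matrix

theorem stmt4_general {d D r n m : ℕ}
    (Φ : Matrix (Fin d) (Fin d) ℂ →ₗ[ℂ] Matrix (Fin D) (Fin r) ℂ)
    (A : Fin n → Matrix (Fin d) (Fin d) ℂ) (B : Fin m → Matrix (Fin d) (Fin d) ℂ)
    (h : (Fisher B - Fisher A).PosSemidef) :
    ((∑ y, (Matrix.trace (B y))⁻¹ • (Φ (B y) * (Φ (B y))ᴴ)) -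
      (∑ x, (Matrix.trace (A x))⁻¹ • (Φ (A x) * (Φ (A x))ᴴ))).PosSemidef := by
  rw [← krausMap_fisher, ← krausMap_fisher, ← map_sub]
  exact h.krausMap Φ

/-- The Fisher information map is at least as informative as any quadratic map. -/
theorem stmt4 {d D r n m : ℕ}
    (Φ : Matrix (Fin d) (Fin d) ℂ →ₗ[ℂ] Matrix (Fin D) (Fin r) ℂ)
    (A : Fin n → Matrix (Fin d) (Fin d) ℂ) (B : Fin m → Matrix (Fin d) (Fin d) ℂ)
    (hA : IsMeasurement A) (hB : IsMeasurement B)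
    (hA0 : ∀ x, A x ≠ 0) (hB0 : ∀ y, B y ≠ 0)
    (h : (Fisher B - Fisher A).PosSemidef) :
    ((∑ y, (Matrix.trace (B y))⁻¹ • (Φ (B y) * (Φ (B y))ᴴ)) -
      (∑ x, (Matrix.trace (A x))⁻¹ • (Φ (A x) * (Φ (A x))ᴴ))).PosSemidef :=
  stmt4_general Φ A B h
end
end

section
/- Let A⁽¹⁾, …, A⁽ᵍ⁾ be measurements on ℂ^d, where A⁽ⁱ⁾ has n i outcomes and all of its effects are nonzero. Suppose there exists a positive definite ρ ∈ Matrix (Fin d) (Fin d) ℂ with trace 1 such that 𝔥(F_ρ(A⁽¹⁾), …, F_ρ(A⁽ᵍ⁾)) > min d (∏ i, n i), where 𝔥 is the height of the family of d² × d² matrices F_ρ(A⁽ⁱ⁾). Then the measurements A⁽¹⁾, …, A⁽ᵍ⁾ are incompatible: there is no measurement C (with any finite number of outcomes) such that A⁽ⁱ⁾ ⪯ C for every i. -/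
open Matrix
open scoped Kronecker ComplexOrder

noncomputable section

/-!
Suppose `C` were a joint measurement, `A⁽ⁱ⁾ x = ∑_y μᵢ(x|y) C y`. The product post-processing
`G f = ∑_y (∏ᵢ μᵢ(fᵢ|y)) C y` is a measurement with `∏ᵢ nᵢ` outcomes which has every `A⁽ⁱ⁾` as a
marginal. The Fisher information map is monotone under post-processing (in every direction `w` this
is the Cauchy–Schwarz inequality `|∑ μ c|² / ∑ μ q ≤ ∑ μ |c|² / q`), so `F_ρ(G)` dominates every
`F_ρ(A⁽ⁱ⁾)` and `𝔥 ≤ tr F_ρ(G)`. Finally `tr F_ρ(G) = ∑_f tr(ρ G_f²) / tr(ρ G_f)`, and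
`G_f² ≤ c G_f` whenever `G_f ≤ c`; taking `c = 1` and `c = tr G_f` gives
`tr F_ρ(G) ≤ min d (∏ᵢ nᵢ)`.
-/

namespace Matrix

open scoped MatrixOrder

variable {n 𝕜 : Type*} [Fintype n] [DecidableEq n] [RCLike 𝕜]

lemma PosSemidef.le_re_trace_smul_one {A : Matrix n n 𝕜} (hA : A.PosSemidef) :
    A ≤ RCLike.re A.trace • (1 : Matrix n n 𝕜) := by
  rw [← Algebra.algebraMap_eq_smul_one, le_algebraMap_iff_spectrum_le hA.1.isSelfAdjoint,
    hA.1.spectrum_real_eq_range_eigenvalues]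
  rintro - ⟨i, rfl⟩
  rw [hA.1.trace_eq_sum_eigenvalues, map_sum]
  simp only [RCLike.ofReal_re]
  exact Finset.single_le_sum (fun j _ => hA.eigenvalues_nonneg j) (Finset.mem_univ i)

lemma mul_self_le_smul_of_le_smul_one {A : Matrix n n 𝕜} (hA : 0 ≤ A) {c : ℝ}
    (hAc : A ≤ c • (1 : Matrix n n 𝕜)) : A * A ≤ c • A := by
  set s := CFC.sqrt A
  have hss : s * s = A := CFC.sqrt_mul_sqrt_self A
  have key := star_left_conjugate_le_conjugate hAc s
  rw [(CFC.sqrt_nonneg A).isSelfAdjoint.star_eq] at key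
  calc A * A = s * A * s := by rw [← hss]; noncomm_ring
    _ ≤ s * (c • 1) * s := key
    _ = c • A := by rw [mul_smul_comm, Matrix.mul_one, smul_mul_assoc, hss]

lemma trace_mul_nonneg {A B : Matrix n n 𝕜} (hA : 0 ≤ A) (hB : 0 ≤ B) : 0 ≤ (A * B).trace := by
  set s := CFC.sqrt A
  have hss : s * s = A := CFC.sqrt_mul_sqrt_self A
  have hconj : 0 ≤ star s * B * s := star_left_conjugate_nonneg hB s
  rw [(CFC.sqrt_nonneg A).isSelfAdjoint.star_eq] at hconj
  rw [← hss, Matrix.mul_assoc, trace_mul_comm]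
  exact hconj.posSemidef.trace_nonneg

lemma PosSemidef.eigenvectorUnitary_mul_diagonal_sqrt {ρ : Matrix n n ℂ} (hρ : ρ.PosSemidef) :
    hρ.1.eigenvectorUnitary.1 * diagonal ((↑) ∘ (√·) ∘ hρ.1.eigenvalues) *
      (star hρ.1.eigenvectorUnitary : Matrix n n ℂ) = CFC.sqrt ρ := by
  rw [CFC.sqrt_eq_cfc, cfc_nnreal_eq_real _ ρ hρ.nonneg, hρ.1.cfc_eq, IsHermitian.cfc,
    Unitary.conjStarAlgAut_apply]
  congr 3
  ext i
  simp only [Function.comp_apply, Real.coe_sqrt, Real.coe_toNNReal',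
    max_eq_left (hρ.eigenvalues_nonneg i)]
  rfl -- `RCLike.ofReal` on `ℂ` unfolds to `Complex.ofReal`

lemma trace_mul_eq_ofReal_re {A B : Matrix n n ℂ} (hA : 0 ≤ A) (hB : 0 ≤ B) :
    (A * B).trace = ((A * B).trace.re : ℂ) :=
  Complex.eq_re_of_ofReal_le (by exact_mod_cast trace_mul_nonneg hA hB)

lemma re_trace_mul_mul_self_le {A B : Matrix n n ℂ} (hA : 0 ≤ A) (hB : 0 ≤ B) {c : ℝ}
    (hBc : B ≤ c • (1 : Matrix n n ℂ)) : (A * (B * B)).trace.re ≤ c * (A * B).trace.re := by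
  have h := trace_mul_nonneg hA (sub_nonneg.mpr (mul_self_le_smul_of_le_smul_one hB hBc))
  rw [Matrix.mul_sub, trace_sub, mul_smul_comm, trace_smul] at h
  simpa [sub_nonneg] using Complex.re_le_re h

end Matrix

section WeightedGram

variable {κ P : Type*} [Fintype κ] [Fintype P]

lemma inv_sum_mul_mul_sq_norm_sum_le {μ q : κ → ℝ} {c : κ → ℂ} (hμ : ∀ y, 0 ≤ μ y)
    (hq : ∀ y, 0 ≤ q y) (hc : ∀ y, q y = 0 → c y = 0) :
    (∑ y, μ y * q y)⁻¹ * ‖∑ y, (μ y : ℂ) * c y‖ ^ 2 ≤ ∑ y, μ y * ((q y)⁻¹ * ‖c y‖ ^ 2) := by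
  have hterm : ∀ y, 0 ≤ μ y * ((q y)⁻¹ * ‖c y‖ ^ 2) := fun y =>
    mul_nonneg (hμ y) (mul_nonneg (inv_nonneg.mpr (hq y)) (sq_nonneg _))
  have hnorm : ‖∑ y, (μ y : ℂ) * c y‖ ≤ ∑ y, μ y * ‖c y‖ := (norm_sum_le _ _).trans_eq <|
    Finset.sum_congr rfl fun y _ => by
      rw [norm_mul, Complex.norm_real, Real.norm_of_nonneg (hμ y)]
  have hcs : (∑ y, μ y * ‖c y‖) ^ 2 ≤ (∑ y, μ y * q y) * ∑ y, μ y * ((q y)⁻¹ * ‖c y‖ ^ 2) := by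
    refine Finset.sum_sq_le_sum_mul_sum_of_sq_le_mul _ (fun y _ => mul_nonneg (hμ y) (hq y))
      (fun y _ => hterm y) fun y _ => ?_
    rcases (hq y).eq_or_lt with hq0 | hqpos
    · simp [hc y hq0.symm]
    · rw [mul_pow, mul_mul_mul_comm, ← mul_assoc (q y), mul_inv_cancel₀ hqpos.ne', one_mul, sq]
  exact inv_mul_le_of_le_mul₀ (Finset.sum_nonneg fun y _ => mul_nonneg (hμ y) (hq y))
    (Finset.sum_nonneg fun y _ => hterm y) ((pow_le_pow_left₀ (norm_nonneg _) hnorm 2).trans hcs)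

def weightedGram (q : κ → ℝ) (v : κ → P → ℂ) : Matrix P P ℂ :=
  ∑ y, (q y)⁻¹ • vecMulVec (v y) (star (v y))

lemma isHermitian_weightedGram (q : κ → ℝ) (v : κ → P → ℂ) : (weightedGram q v).IsHermitian :=
  isSelfAdjoint_sum _ fun y _ =>
    (IsSelfAdjoint.all _).smul (posSemidef_vecMulVec_self_star (v y)).isHermitian.isSelfAdjoint

lemma dotProduct_weightedGram_mulVec (q : κ → ℝ) (v : κ → P → ℂ) (w : P → ℂ) :
    star w ⬝ᵥ (weightedGram q v *ᵥ w) = ((∑ y, (q y)⁻¹ * ‖star (v y) ⬝ᵥ w‖ ^ 2 : ℝ) : ℂ) := by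
  simp only [weightedGram, sum_mulVec, dotProduct_sum, smul_mulVec, dotProduct_smul,
    vecMulVec_mulVec, Complex.ofReal_sum, Complex.ofReal_mul, Complex.ofReal_pow]
  refine Finset.sum_congr rfl fun y _ => ?_
  rw [star_dotProduct (v y) w, MulOpposite.smul_eq_mul_unop, MulOpposite.unop_op,
    Complex.star_def, Complex.mul_conj', Complex.norm_conj, Complex.real_smul]

lemma trace_weightedGram (q : κ → ℝ) (v : κ → P → ℂ) :
    (weightedGram q v).trace = ∑ y, (q y)⁻¹ • (star (v y) ⬝ᵥ v y) := by
  simp only [weightedGram, trace_sum, trace_smul, trace_vecMulVec, dotProduct_comm (v _)]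

open scoped MatrixOrder in
theorem weightedGram_le {κ' : Type*} [Fintype κ'] {μ : κ' → κ → ℝ} (hμ0 : ∀ x y, 0 ≤ μ x y)
    (hμ1 : ∀ y, ∑ x, μ x y = 1) {q : κ → ℝ} (hq : ∀ y, 0 ≤ q y) {v : κ → P → ℂ}
    (hv : ∀ y, q y = 0 → v y = 0) :
    weightedGram (fun x => ∑ y, μ x y * q y) (fun x => ∑ y, (μ x y : ℂ) • v y) ≤
      weightedGram q v := by
  rw [Matrix.le_iff, posSemidef_iff_dotProduct_mulVec]
  refine ⟨(isHermitian_weightedGram _ _).sub (isHermitian_weightedGram _ _), fun w => ?_⟩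
  rw [sub_mulVec, dotProduct_sub, dotProduct_weightedGram_mulVec, dotProduct_weightedGram_mulVec,
    ← Complex.ofReal_sub, Complex.zero_le_real, sub_nonneg]
  have hpush : ∀ x, star (∑ y, (μ x y : ℂ) • v y) ⬝ᵥ w = ∑ y, (μ x y : ℂ) * (star (v y) ⬝ᵥ w) :=
    fun x => by simp [star_sum, sum_dotProduct, star_smul]
  calc ∑ x, (∑ y, μ x y * q y)⁻¹ * ‖star (∑ y, (μ x y : ℂ) • v y) ⬝ᵥ w‖ ^ 2
      ≤ ∑ x, ∑ y, μ x y * ((q y)⁻¹ * ‖star (v y) ⬝ᵥ w‖ ^ 2) :=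
        Finset.sum_le_sum fun x _ => hpush x ▸ inv_sum_mul_mul_sq_norm_sum_le (hμ0 x) hq
          fun y hy => by rw [hv y hy, star_zero, zero_dotProduct]
    _ = ∑ y, (q y)⁻¹ * ‖star (v y) ⬝ᵥ w‖ ^ 2 := by
        rw [Finset.sum_comm]
        simp only [← Finset.sum_mul, hμ1, one_mul]

end WeightedGram

section FisherRho

open scoped MatrixOrder

variable {ι κ : Type*} [Fintype ι] [DecidableEq ι] [Fintype κ] {ρ : Matrix ι ι ℂ}

lemma star_vec_dotProduct_vec_sqrt_mul (hρ : 0 ≤ ρ) (B : Matrix ι ι ℂ) :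
    star (vec (CFC.sqrt ρ * B)ᵀ) ⬝ᵥ vec (CFC.sqrt ρ * B)ᵀ = (ρ * (B * Bᴴ)).trace := by
  have hS : (CFC.sqrt ρ)ᴴ = CFC.sqrt ρ := (CFC.sqrt_nonneg ρ).isSelfAdjoint
  rw [star_vec_dotProduct_vec, conjTranspose_transpose_eq_transpose_conjTranspose,
    ← transpose_mul, trace_transpose, conjTranspose_mul, hS, ← Matrix.mul_assoc, trace_mul_comm,
    ← Matrix.mul_assoc, ← Matrix.mul_assoc, CFC.sqrt_mul_sqrt_self ρ, Matrix.mul_assoc]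

/-- `outerProd` flattens a matrix row by row, i.e. as Mathlib's (column-major) `vec` of its
transpose. -/
lemma fisherRho_eq_weightedGram (hρ : ρ.PosDef) (A : κ → Matrix ι ι ℂ) {q : κ → ℝ}
    (hq : ∀ x, (ρ * A x).trace = q x) :
    FisherRho hρ A = weightedGram q fun x => vec (CFC.sqrt ρ * A x)ᵀ := by
  rw [FisherRho, hρ.posSemidef.eigenvectorUnitary_mul_diagonal_sqrt, weightedGram]
  refine Finset.sum_congr rfl fun x _ => ?_
  rw [hq x, ← Complex.ofReal_inv, Complex.coe_smul]
  rfl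

lemma vec_sqrt_mul_eq_zero_of_re_trace_eq_zero (hρ : 0 ≤ ρ) {B : Matrix ι ι ℂ} (hB : 0 ≤ B)
    (h : (ρ * B).trace.re = 0) : vec (CFC.sqrt ρ * B)ᵀ = 0 := by
  have hBB : 0 ≤ B * B := by
    simpa [hB.isSelfAdjoint.star_eq] using star_mul_self_nonneg B
  have hle := re_trace_mul_mul_self_le hρ hB hB.posSemidef.le_re_trace_smul_one
  rw [h, mul_zero] at hle
  rw [← dotProduct_star_self_eq_zero, star_vec_dotProduct_vec_sqrt_mul hρ,
    hB.posSemidef.1.eq, trace_mul_eq_ofReal_re hρ hBB,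
    le_antisymm hle (Complex.re_le_re (trace_mul_nonneg hρ hBB)), Complex.ofReal_zero]

lemma isHermitian_fisherRho (hρ : ρ.PosDef) {B : κ → Matrix ι ι ℂ} (hB : ∀ y, 0 ≤ B y) :
    (FisherRho hρ B).IsHermitian := by
  rw [fisherRho_eq_weightedGram hρ B fun y => trace_mul_eq_ofReal_re hρ.posSemidef.nonneg (hB y)]
  exact isHermitian_weightedGram _ _

theorem fisherRho_le_of_eq_sum {κ' : Type*} [Fintype κ'] (hρ : ρ.PosDef)
    {A : κ' → Matrix ι ι ℂ} {B : κ → Matrix ι ι ℂ} (hB : ∀ y, 0 ≤ B y) {μ : κ' → κ → ℝ}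
    (hμ0 : ∀ x y, 0 ≤ μ x y) (hμ1 : ∀ y, ∑ x, μ x y = 1)
    (hAB : ∀ x, A x = ∑ y, (μ x y : ℂ) • B y) :
    FisherRho hρ A ≤ FisherRho hρ B := by
  have hρ0 := hρ.posSemidef.nonneg
  set q : κ → ℝ := fun y => (ρ * B y).trace.re
  have hqB : ∀ y, (ρ * B y).trace = q y := fun y => trace_mul_eq_ofReal_re hρ0 (hB y)
  have hqA : ∀ x, (ρ * A x).trace = ((∑ y, μ x y * q y : ℝ) : ℂ) := fun x => by
    simp only [hAB x, Matrix.mul_sum, mul_smul_comm, trace_sum, trace_smul, hqB, smul_eq_mul,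
      Complex.ofReal_sum, Complex.ofReal_mul]
  have hvA : ∀ x, vec (CFC.sqrt ρ * A x)ᵀ = ∑ y, (μ x y : ℂ) • vec (CFC.sqrt ρ * B y)ᵀ :=
    fun x => by
      simp only [hAB x, Matrix.mul_sum, mul_smul_comm, transpose_sum, transpose_smul, vec_sum,
        vec_smul]
  rw [fisherRho_eq_weightedGram hρ A hqA, fisherRho_eq_weightedGram hρ B hqB]
  simp only [hvA]
  exact weightedGram_le hμ0 hμ1 (fun y => Complex.re_le_re (trace_mul_nonneg hρ0 (hB y)))
    fun y => vec_sqrt_mul_eq_zero_of_re_trace_eq_zero hρ0 (hB y)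

lemma re_trace_fisherRho_le_sum (hρ : ρ.PosDef) {B : κ → Matrix ι ι ℂ} (hB : ∀ y, 0 ≤ B y)
    {c : κ → ℝ} (hc : ∀ y, 0 ≤ c y) (hBc : ∀ y, B y ≤ c y • (1 : Matrix ι ι ℂ)) :
    (FisherRho hρ B).trace.re ≤ ∑ y, c y := by
  have hρ0 := hρ.posSemidef.nonneg
  rw [fisherRho_eq_weightedGram hρ B fun y => trace_mul_eq_ofReal_re hρ0 (hB y),
    trace_weightedGram, Complex.re_sum]
  refine Finset.sum_le_sum fun y _ => ?_
  rw [star_vec_dotProduct_vec_sqrt_mul hρ0, (hB y).posSemidef.1.eq, Complex.smul_re, smul_eq_mul]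
  exact inv_mul_le_of_le_mul₀ (Complex.re_le_re (trace_mul_nonneg hρ0 (hB y))) (hc y)
    ((re_trace_mul_mul_self_le hρ0 (hB y) (hBc y)).trans_eq (mul_comm _ _))

theorem IsMeasurement.re_trace_fisherRho_le (hρ : ρ.PosDef) {B : κ → Matrix ι ι ℂ}
    (hB : IsMeasurement B) :
    (FisherRho hρ B).trace.re ≤ min (Fintype.card ι : ℝ) (Fintype.card κ) := by
  have hB0 : ∀ y, 0 ≤ B y := fun y => (hB.1 y).nonneg
  refine le_min ?_ ?_
  · refine (re_trace_fisherRho_le_sum hρ hB0 (fun y => (hB.1 y).trace_nonneg.1)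
      fun y => (hB.1 y).le_re_trace_smul_one).trans_eq ?_
    rw [← Complex.re_sum, ← trace_sum, hB.2, trace_one, Complex.natCast_re]
  · refine (re_trace_fisherRho_le_sum hρ hB0 (fun _ => zero_le_one) fun y => ?_).trans_eq
      (by simp)
    rw [one_smul, ← hB.2]
    exact Finset.single_le_sum (fun z _ => hB0 z) (Finset.mem_univ y)

end FisherRho

lemma Fintype.sum_prod_filter_apply_eq {I R : Type*} [Fintype I] [DecidableEq I] [CommSemiring R]
    {κ : I → Type*} [∀ i, Fintype (κ i)] [∀ i, DecidableEq (κ i)] (f : ∀ i, κ i → R) (i : I)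
    (a : κ i) :
    ∑ x ∈ Finset.univ.filter (fun x : ∀ j, κ j => x i = a), ∏ j, f j (x j) =
      f i a * ∏ j ∈ Finset.univ \ {i}, ∑ b, f j b := by
  rw [← Fintype.piFinset_univ, ← Fintype.piFinset_update_singleton_eq_filter_piFinset_eq _ i
    (Finset.mem_univ a), ← Finset.prod_univ_sum,
    Finset.prod_congr rfl fun j _ => Function.apply_update (fun j s => ∑ b ∈ s, f j b) _ i {a} j,
    Finset.prod_update_of_mem (Finset.mem_univ i), Finset.sum_singleton]

section JointMeasurement

variable {ι I γ : Type*} [Fintype I] [DecidableEq I] [Fintype γ]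
  {κ : I → Type*} [∀ i, Fintype (κ i)]

def jointMeasurement (μ : ∀ i, κ i → γ → ℝ) (C : γ → Matrix ι ι ℂ) (x : ∀ i, κ i) :
    Matrix ι ι ℂ :=
  ∑ y, ((∏ i, μ i (x i) y : ℝ) : ℂ) • C y

variable {μ : ∀ i, κ i → γ → ℝ} {C : γ → Matrix ι ι ℂ}

theorem isMeasurement_jointMeasurement [Fintype ι] [DecidableEq ι] (hC : IsMeasurement C)
    (hμ0 : ∀ i x y, 0 ≤ μ i x y) (hμ1 : ∀ i y, ∑ x, μ i x y = 1) :
    IsMeasurement (jointMeasurement μ C) := by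
  refine ⟨fun x => posSemidef_sum _ fun y _ => (hC.1 y).smul ?_, ?_⟩
  · exact_mod_cast Finset.prod_nonneg fun i _ => hμ0 i (x i) y
  · simp only [jointMeasurement]
    rw [← hC.2, Finset.sum_comm]
    refine Finset.sum_congr rfl fun y _ => ?_
    rw [← Finset.sum_smul, ← Complex.ofReal_sum, ← Fintype.prod_sum fun i t => μ i t y]
    simp [hμ1]

theorem sum_ite_smul_jointMeasurement [∀ i, DecidableEq (κ i)] (hμ1 : ∀ i y, ∑ x, μ i x y = 1)
    (i : I) (a : κ i) :
    ∑ x, ((if x i = a then 1 else 0 : ℝ) : ℂ) • jointMeasurement μ C x =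
      ∑ y, (μ i a y : ℂ) • C y := by
  simp only [apply_ite, Complex.ofReal_one, Complex.ofReal_zero, ite_smul, one_smul, zero_smul,
    ← Finset.sum_filter, jointMeasurement]
  rw [Finset.sum_comm]
  refine Finset.sum_congr rfl fun y _ => ?_
  rw [← Finset.sum_smul, ← Complex.ofReal_sum,
    Fintype.sum_prod_filter_apply_eq (fun j t => μ j t y)]
  simp [hμ1]

end JointMeasurement

open scoped MatrixOrder in
lemma height_le {ι κ : Type*} [Fintype ι] [Fintype κ] {X : κ → Matrix ι ι ℂ}
    {H : Matrix ι ι ℂ} (hH : H.IsHermitian) (hX : ∀ i, X i ≤ H) {t : ℝ} (ht : 0 ≤ t)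
    (hHt : H.trace.re ≤ t) : height X ≤ t := by
  -- the traces are unbounded below only for an empty family, where `sInf` is the junk value `0`
  by_cases hbdd : BddBelow {r : ℝ | ∃ H : Matrix ι ι ℂ, H.IsHermitian ∧
      (∀ i, (H - X i).PosSemidef) ∧ r = H.trace.re}
  · exact (csInf_le hbdd ⟨H, hH, hX, rfl⟩).trans hHt
  · rw [height, Real.sInf_of_not_bddBelow hbdd]
    exact ht

theorem stmt17_general {d g : ℕ} (n : Fin g → ℕ)
    (A : (i : Fin g) → Fin (n i) → Matrix (Fin d) (Fin d) ℂ)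
    (h : ∃ (ρ : Matrix (Fin d) (Fin d) ℂ) (hρ : ρ.PosDef), Matrix.trace ρ = 1 ∧
      ((min d (∏ i, n i) : ℕ) : ℝ) < height (fun i => FisherRho hρ (A i))) :
    ¬ ∃ (m : ℕ) (C : Fin m → Matrix (Fin d) (Fin d) ℂ),
      IsMeasurement C ∧ ∀ i, PostProc (A i) C := by
  rintro ⟨m, C, hC, hAC⟩
  obtain ⟨ρ, hρ, -, hlt⟩ := h
  choose μ hμ0 hμ1 hAμ using hAC
  have hG := isMeasurement_jointMeasurement hC hμ0 hμ1
  refine hlt.not_ge (height_le (isHermitian_fisherRho hρ fun f => (hG.1 f).nonneg) (fun i => ?_)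
    (Nat.cast_nonneg _) ((hG.re_trace_fisherRho_le hρ).trans_eq (by simp)))
  refine fisherRho_le_of_eq_sum hρ (fun f => (hG.1 f).nonneg)
    (μ := fun x f => if f i = x then 1 else 0) (fun x f => by positivity) (fun f => by simp)
    fun x => ?_
  rw [hAμ i x, sum_ite_smul_jointMeasurement hμ1]

/-- The improved Fisher information incompatibility criterion. -/
theorem stmt17 {d g : ℕ} (n : Fin g → ℕ)
    (A : (i : Fin g) → Fin (n i) → Matrix (Fin d) (Fin d) ℂ)
    (hA : ∀ i, IsMeasurement (A i)) (hA0 : ∀ i x, A i x ≠ 0)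
    (h : ∃ (ρ : Matrix (Fin d) (Fin d) ℂ) (hρ : ρ.PosDef), Matrix.trace ρ = 1 ∧
      ((min d (∏ i, n i) : ℕ) : ℝ) < height (fun i => FisherRho hρ (A i))) :
    ¬ ∃ (m : ℕ) (C : Fin m → Matrix (Fin d) (Fin d) ℂ),
      IsMeasurement C ∧ ∀ i, PostProc (A i) C :=
  stmt17_general n A h
end
end
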